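/- Let S > 0 and let κ, σ : [0,S] → ℝ be continuous. Suppose B : [0,S] → ℝ is differentiable and satisfies the Riccati equation B'(t) = 1 + κ(t)B(t) − (1/2)σ(t)²B(t)² for all t ∈ [0,S], with terminal condition B(S) = 0. Then B(t) < 0 for every t ∈ [0,S). -/

import Mathlib

/-!
Wherever `B` vanishes on `[0, S]`, the Riccati equation forces `B' = 1`, so `B` can cross zero
only upwards. Hence if `B t ≥ 0` for some `t < S`, then `B ≥ 0` on all of `[t, S]`; but
`B (S) = 0` with `B'(S) = 1` makes `B` negative just to the left of `S`.
-/

open Set Filter Topology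

section SignNearSimpleZero

variable {f : ℝ → ℝ} {f' x : ℝ}

lemma eventually_nhdsGT_pos_of_hasDerivAt (hf : HasDerivAt f f' x) (hf' : 0 < f')
    (hx : f x = 0) : ∀ᶠ y in 𝓝[>] x, 0 < f y := by
  filter_upwards [nhdsWithin_le_nhds
      (eventually_nhdsWithin_sign_eq_of_deriv_pos (hf.deriv ▸ hf') hx),
    self_mem_nhdsWithin] with y hsign hxy
  rw [sign_pos (sub_pos.mpr hxy)] at hsign
  exact sign_eq_one_iff.mp hsign

lemma eventually_nhdsLT_neg_of_hasDerivAt (hf : HasDerivAt f f' x) (hf' : 0 < f')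
    (hx : f x = 0) : ∀ᶠ y in 𝓝[<] x, f y < 0 := by
  filter_upwards [nhdsWithin_le_nhds
      (eventually_nhdsWithin_sign_eq_of_deriv_pos (hf.deriv ▸ hf') hx),
    self_mem_nhdsWithin] with y hsign hyx
  rw [sign_neg (sub_neg.mpr hyx)] at hsign
  exact sign_eq_neg_one_iff.mp hsign

end SignNearSimpleZero

lemma nonneg_on_Icc_of_eventually_pos_at_zeros {f : ℝ → ℝ} {a b : ℝ}
    (hf : ContinuousOn f (Icc a b)) (ha : 0 ≤ f a)
    (hzero : ∀ x ∈ Ico a b, f x = 0 → ∀ᶠ y in 𝓝[>] x, 0 < f y) :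
    ∀ x ∈ Icc a b, 0 ≤ f x := by
  refine IsClosed.Icc_subset_of_forall_mem_nhdsWithin (s := {x | 0 ≤ f x}) ?_ ha ?_
  · rw [inter_comm]
    exact hf.preimage_isClosed_of_isClosed isClosed_Icc isClosed_Ici
  · rintro x ⟨hfx : 0 ≤ f x, hx⟩
    rcases hfx.eq_or_lt with hfx | hfx
    · exact (hzero x hx hfx.symm).mono fun _ ↦ le_of_lt
    · have hcont : ContinuousWithinAt f (Ioi x) x :=
        (hf x (Ico_subset_Icc_self hx)).mono_of_mem_nhdsWithin
          (Icc_mem_nhdsGT_of_mem hx)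
      exact (hcont.eventually (lt_mem_nhds hfx)).mono fun _ ↦ le_of_lt

theorem riccati_B_neg
    (S : ℝ)
    (κ σ : ℝ → ℝ)
    (B : ℝ → ℝ)
    (hB : ∀ t ∈ Set.Icc (0 : ℝ) S,
      HasDerivAt B (1 + κ t * B t - 1 / 2 * (σ t) ^ 2 * (B t) ^ 2) t)
    (hBS : B S = 0) :
    ∀ t ∈ Set.Ico (0 : ℝ) S, B t < 0 := by
  intro t ht
  by_contra! hBt
  have hderiv_at_zero : ∀ x ∈ Icc 0 S, B x = 0 → HasDerivAt B 1 x := fun x hx h0 ↦ by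
    simpa [h0] using hB x hx
  have hsub : Icc t S ⊆ Icc 0 S := Icc_subset_Icc_left ht.1
  have hnonneg : ∀ x ∈ Icc t S, 0 ≤ B x :=
    nonneg_on_Icc_of_eventually_pos_at_zeros
      (fun x hx ↦ (hB x (hsub hx)).continuousAt.continuousWithinAt) hBt
      fun x hx h0 ↦ eventually_nhdsGT_pos_of_hasDerivAt
        (hderiv_at_zero x (hsub (Ico_subset_Icc_self hx)) h0) one_pos h0
  have hneg_left : ∀ᶠ x in 𝓝[<] S, B x < 0 :=
    eventually_nhdsLT_neg_of_hasDerivAt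
      (hderiv_at_zero S ⟨ht.1.trans ht.2.le, le_rfl⟩ hBS) one_pos hBS
  obtain ⟨x, hBx, htx, hxS⟩ := (hneg_left.and (Ioo_mem_nhdsLT ht.2)).exists
  exact hBx.not_ge (hnonneg x ⟨htx.le, hxS.le⟩)
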